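/- arXiv:2102.08143 — 3 statements merged into one kernel-verified Lean document; each statement's English description precedes it below -/
import Mathlib

section
/- Let d ≥ 1, let f : ℝ^d × ℝ → ℝ^d be continuously differentiable, let ρ : ℝ^d × ℝ → ℝ be continuously differentiable and satisfy ∂ρ/∂t(x,t) = −∑_{k=1}^d ∂/∂x_k [f_k(x,t) ρ(x,t)] for all (x,t), and let x : ℝ → ℝ^d be differentiable with x'(t) = f(x(t), t). Then for every t ≥ 0, ρ(x(t), t) = ρ(x(0), 0) · exp( −∫_0^t ∑_{k=1}^d ∂f_k/∂x_k (x(s), s) ds ). -/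
/-!
Along a characteristic `x`, the chain rule gives `d/dt ρ(x t, t) = f · ∇ₓρ + ∂ₜρ`, and expanding
`∂ₜρ = -∑ₖ ∂ₖ(fₖ ρ)` by the product rule cancels the transport term `f · ∇ₓρ`, leaving the linear
scalar ODE `d/dt ρ(x t, t) = -(div f)(x t, t) ρ(x t, t)`. Multiplying by the integrating factor
`exp (∫₀ᵗ div f)` makes it constant.
-/

open Real Finset Function

theorem eq_mul_exp_neg_integral_of_hasDerivAt {g F : ℝ → ℝ} (hF : Continuous F)
    (hg : ∀ t, HasDerivAt g (-F t * g t) t) (a t : ℝ) :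
    g t = g a * exp (-∫ s in a..t, F s) := by
  set I : ℝ → ℝ := fun t => ∫ s in a..t, F s
  have hI : ∀ t, HasDerivAt I (F t) t := fun t => (hF.integral_hasStrictDerivAt a t).hasDerivAt
  have hconst : ∀ t, HasDerivAt (fun t => g t * exp (I t)) 0 t := fun t =>
    ((hg t).fun_mul (hI t).exp).congr_deriv (by ring)
  have h := is_const_of_deriv_eq_zero (fun s => (hconst s).differentiableAt)
    (fun s => (hconst s).deriv) t a
  simp only [I, intervalIntegral.integral_same, exp_zero, mul_one] at h
  rw [← h, mul_assoc, ← exp_add, add_neg_cancel, exp_zero, mul_one]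

section PartialDerivatives

variable {ι G : Type*} [Fintype ι] [DecidableEq ι] [NormedAddCommGroup G] [NormedSpace ℝ G]
  {u : (ι → ℝ) × ℝ → G} {x : ι → ℝ} {t : ℝ}

theorem DifferentiableAt.hasDerivAt_update_left (hu : DifferentiableAt ℝ u (x, t)) (k : ι) :
    HasDerivAt (fun y => u (update x k y, t)) (fderiv ℝ u (x, t) (Pi.single k 1, 0)) (x k) := by
  have hu' : HasFDerivAt u (fderiv ℝ u (x, t)) (update x k (x k), t) := by
    simpa only [update_eq_self] using hu.hasFDerivAt
  exact hu'.comp_hasDerivAt (x k) ((hasDerivAt_update x k (x k)).prodMk (hasDerivAt_const _ _))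

omit [DecidableEq ι] in
theorem DifferentiableAt.hasDerivAt_right (hu : DifferentiableAt ℝ u (x, t)) :
    HasDerivAt (fun s => u (x, s)) (fderiv ℝ u (x, t) (0, 1)) t :=
  hu.hasFDerivAt.comp_hasDerivAt t ((hasDerivAt_const _ _).prodMk (hasDerivAt_id t))

theorem ContinuousLinearMap.apply_prod_one (L : (ι → ℝ) × ℝ →L[ℝ] G) (v : ι → ℝ) :
    L (v, 1) = ∑ k, v k • L (Pi.single k 1, 0) + L (0, 1) := by
  have hv : ((v, 1) : (ι → ℝ) × ℝ) = ∑ k, v k • ((Pi.single k 1, 0) : (ι → ℝ) × ℝ) + (0, 1) := by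
    ext i
    · simp [Prod.fst_sum, Finset.sum_apply, Pi.single_apply]
    · simp [Prod.snd_sum]
  rw [hv, map_add, map_sum]
  simp only [map_smul]

theorem DifferentiableAt.hasDerivAt_comp_graph {x : ℝ → ι → ℝ} {v : ι → ℝ}
    (hu : DifferentiableAt ℝ u (x t, t)) (hx : HasDerivAt x v t) :
    HasDerivAt (fun s => u (x s, s))
      (∑ k, v k • fderiv ℝ u (x t, t) (Pi.single k 1, 0) + fderiv ℝ u (x t, t) (0, 1)) t := by
  rw [← ContinuousLinearMap.apply_prod_one]
  exact hu.hasFDerivAt.comp_hasDerivAt (f := fun s => (x s, s)) t (hx.prodMk (hasDerivAt_id' t))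

end PartialDerivatives

section Divergence

variable {ι : Type*} [Fintype ι] [DecidableEq ι]

noncomputable def spatialDivergence (f : (ι → ℝ) × ℝ → ι → ℝ) (x : ι → ℝ) (t : ℝ) : ℝ :=
  ∑ k, deriv (fun y => f (update x k y, t) k) (x k)

theorem spatialDivergence_eq_sum_fderiv {f : (ι → ℝ) × ℝ → ι → ℝ} {x : ι → ℝ} {t : ℝ}
    (hf : DifferentiableAt ℝ f (x, t)) :
    spatialDivergence f x t = ∑ k, fderiv ℝ (fun p => f p k) (x, t) (Pi.single k 1, 0) :=
  Finset.sum_congr rfl fun k _ =>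
    (differentiableAt_pi.mp hf k).hasDerivAt_update_left k |>.deriv

theorem Continuous.spatialDivergence_comp {f : (ι → ℝ) × ℝ → ι → ℝ} (hf : ContDiff ℝ 1 f)
    {x : ℝ → ι → ℝ} (hx : Continuous x) : Continuous fun s => spatialDivergence f (x s) s := by
  simp_rw [spatialDivergence_eq_sum_fderiv (hf.differentiable one_ne_zero _)]
  refine continuous_finsetSum _ fun k _ => ?_
  exact ((contDiff_pi.mp hf k).continuous_fderiv_apply one_ne_zero).comp
    ((hx.prodMk continuous_id).prodMk continuous_const)

theorem hasDerivAt_comp_characteristic {f : (ι → ℝ) × ℝ → ι → ℝ} {ρ : (ι → ℝ) × ℝ → ℝ}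
    {x : ℝ → ι → ℝ} {t : ℝ} (hf : DifferentiableAt ℝ f (x t, t))
    (hρ : DifferentiableAt ℝ ρ (x t, t))
    (hconv : deriv (fun s => ρ (x t, s)) t
        = -∑ k, deriv (fun y => f (update (x t) k y, t) k * ρ (update (x t) k y, t)) (x t k))
    (hx : HasDerivAt x (f (x t, t)) t) :
    HasDerivAt (fun s => ρ (x s, s)) (-spatialDivergence f (x t) t * ρ (x t, t)) t := by
  set Dρ := fderiv ℝ ρ (x t, t)
  set Df := fun k => fderiv ℝ (fun p => f p k) (x t, t)
  have hprod : ∀ k, deriv (fun y => f (update (x t) k y, t) k * ρ (update (x t) k y, t)) (x t k)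
      = Df k (Pi.single k 1, 0) * ρ (x t, t) + f (x t, t) k * Dρ (Pi.single k 1, 0) := fun k => by
    have h := ((differentiableAt_pi.mp hf k).hasDerivAt_update_left k).fun_mul
      (hρ.hasDerivAt_update_left k)
    simpa only [update_eq_self] using h.deriv
  have htime : Dρ (0, 1) = -∑ k, (Df k (Pi.single k 1, 0) * ρ (x t, t)
      + f (x t, t) k * Dρ (Pi.single k 1, 0)) := by
    rw [← hρ.hasDerivAt_right.deriv, hconv, Finset.sum_congr rfl fun k _ => hprod k]
  refine (hρ.hasDerivAt_comp_graph hx).congr_deriv ?_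
  rw [htime, spatialDivergence_eq_sum_fderiv hf, Finset.sum_add_distrib, ← Finset.sum_mul]
  simp only [smul_eq_mul]
  ring

end Divergence

theorem fpe_convection_pdf_formula_general
    (d : ℕ)
    (f : (Fin d → ℝ) × ℝ → Fin d → ℝ) (hf : ContDiff ℝ 1 f)
    (ρ : (Fin d → ℝ) × ℝ → ℝ) (hρ : ContDiff ℝ 1 ρ)
    (hconv : ∀ (x : Fin d → ℝ) (t : ℝ),
      deriv (fun s => ρ (x, s)) t
        = - ∑ k, deriv
            (fun y => f (Function.update x k y, t) k * ρ (Function.update x k y, t)) (x k))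
    (x : ℝ → Fin d → ℝ) (hx : ∀ t, HasDerivAt x (f (x t, t)) t) :
    ∀ t : ℝ, 0 ≤ t →
      ρ (x t, t) = ρ (x 0, 0) *
        Real.exp (-(∫ s in (0 : ℝ)..t,
          ∑ k, deriv (fun y => f (Function.update (x s) k y, s) k) (x s k))) := by
  intro t _
  have hxc : Continuous x := continuous_iff_continuousAt.mpr fun t => (hx t).continuousAt
  exact eq_mul_exp_neg_integral_of_hasDerivAt (hxc.spatialDivergence_comp hf)
    (fun s => hasDerivAt_comp_characteristic (hf.differentiable one_ne_zero _)
      (hρ.differentiable one_ne_zero _) (hconv (x s) s) (hx s)) 0 t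

/-- the value of the PDF solving the convection equation along a
characteristic trajectory is obtained from the value at the preimage `x 0` by
multiplying with `exp(-∫_0^t trace(∂f/∂x)(x(s),s) ds)`. -/
theorem fpe_convection_pdf_formula
    (d : ℕ) (hd : 1 ≤ d)
    (f : (Fin d → ℝ) × ℝ → Fin d → ℝ) (hf : ContDiff ℝ 1 f)
    (ρ : (Fin d → ℝ) × ℝ → ℝ) (hρ : ContDiff ℝ 1 ρ)
    (hconv : ∀ (x : Fin d → ℝ) (t : ℝ),
      deriv (fun s => ρ (x, s)) t
        = - ∑ k, deriv
            (fun y => f (Function.update x k y, t) k * ρ (Function.update x k y, t)) (x k))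
    (x : ℝ → Fin d → ℝ) (hx : ∀ t, HasDerivAt x (f (x t, t)) t) :
    ∀ t : ℝ, 0 ≤ t →
      ρ (x t, t) = ρ (x 0, 0) *
        Real.exp (-(∫ s in (0 : ℝ)..t,
          ∑ k, deriv (fun y => f (Function.update (x s) k y, s) k) (x s k))) :=
  fpe_convection_pdf_formula_general d f hf ρ hρ hconv x hx
end

section
/- Let d ≥ 1, let A be a d×d real matrix, let D_c > 0, and let W be a symmetric positive-definite d×d real matrix satisfying the Lyapunov equation A·W + W·Aᵀ = 2 D_c I_d. Define ρ_st : ℝ^d → ℝ by ρ_st(x) = ((2π)^d det W)^{−1/2} exp(−(1/2) xᵀ W^{−1} x). Then ρ_st is a stationary solution of the Ornstein–Uhlenbeck Fokker–Planck equation with zero long-term mean: for all x ∈ ℝ^d, D_c·∑_{i=1}^d ∂²ρ_st/∂x_i²(x) + ∑_{i=1}^d ∂/∂x_i [(A x)_i · ρ_st(x)] = 0. -/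
/-!
Write `S = W⁻¹` and `g(x) = exp (-½ xᵀ S x)`. Along every coordinate line `∂ᵢ g = -(S x)ᵢ g`, so
the Fokker–Planck operator applied to `c g` equals `c g` times
`D_c (|S x|² - tr S) + tr A - (A x)·(S x)`. Conjugating the Lyapunov equation by `S` gives
`S A + Aᵀ S = 2 D_c S²`; its quadratic form at `x` is `(A x)·(S x) = D_c |S x|²`, and the trace of
the Lyapunov equation times `S` is `tr A = D_c tr S`, so the factor vanishes.
-/

open Real Matrix Function

section Calculus

variable {𝕜 m n : Type*} [NontriviallyNormedField 𝕜] [Fintype n]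
  {u v : 𝕜 → n → 𝕜} {u' v' : n → 𝕜} {t : 𝕜}

theorem HasDerivAt.dotProduct (hu : HasDerivAt u u' t) (hv : HasDerivAt v v' t) :
    HasDerivAt (fun t => u t ⬝ᵥ v t) (u' ⬝ᵥ v t + u t ⬝ᵥ v') t := by
  have := HasDerivAt.fun_sum (u := Finset.univ) fun j _ =>
    (hasDerivAt_pi.1 hu j).fun_mul (hasDerivAt_pi.1 hv j)
  simpa only [_root_.dotProduct, Finset.sum_add_distrib] using this

theorem HasDerivAt.matrix_mulVec (M : Matrix m n 𝕜) (hu : HasDerivAt u u' t) :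
    HasDerivAt (fun t => M *ᵥ u t) (M *ᵥ u') t :=
  hasDerivAt_pi.2 fun j => by
    simpa only [mulVec, zero_dotProduct, zero_add] using (hasDerivAt_const t (M j)).dotProduct hu

end Calculus

theorem Matrix.IsSymm.vecMul_eq_mulVec {α n : Type*} [Fintype n] [CommSemiring α]
    {S : Matrix n n α} (hS : S.IsSymm) (x : n → α) : x ᵥ* S = S *ᵥ x := by
  rw [← vecMul_transpose, hS.eq]

section Gaussian

variable {n : Type*} [Fintype n] [DecidableEq n] {S : Matrix n n ℝ}

noncomputable def gaussianKernel (S : Matrix n n ℝ) (x : n → ℝ) : ℝ :=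
  exp (-(1 / 2) * (x ⬝ᵥ S *ᵥ x))

theorem hasDerivAt_mulVec_update_apply (M : Matrix n n ℝ) (x : n → ℝ) (i j : n) (y : ℝ) :
    HasDerivAt (fun t => (M *ᵥ update x i t) j) (M j i) y := by
  simpa using hasDerivAt_pi.1 ((hasDerivAt_update x i y).matrix_mulVec M) j

theorem hasDerivAt_dotProduct_mulVec_update (hS : S.IsSymm) (x : n → ℝ) (i : n) (y : ℝ) :
    HasDerivAt (fun t => update x i t ⬝ᵥ S *ᵥ update x i t) (2 * (S *ᵥ update x i y) i) y := by
  have hu := hasDerivAt_update x i y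
  refine (hu.dotProduct (hu.matrix_mulVec S)).congr_deriv ?_
  rw [single_one_dotProduct, dotProduct_mulVec, dotProduct_single_one, hS.vecMul_eq_mulVec]
  ring

theorem hasDerivAt_gaussianKernel_update (hS : S.IsSymm) (c : ℝ) (x : n → ℝ) (i : n) (y : ℝ) :
    HasDerivAt (fun t => c * gaussianKernel S (update x i t))
      (-(S *ᵥ update x i y) i * (c * gaussianKernel S (update x i y))) y := by
  refine ((((hasDerivAt_dotProduct_mulVec_update hS x i y).const_mul (-(1 / 2))).exp).const_mul
    c).congr_deriv ?_
  unfold gaussianKernel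
  ring

theorem deriv_deriv_gaussianKernel_update (hS : S.IsSymm) (c : ℝ) (x : n → ℝ) (i : n) :
    deriv (deriv fun t => c * gaussianKernel S (update x i t)) (x i)
      = ((S *ᵥ x) i ^ 2 - S i i) * (c * gaussianKernel S x) := by
  have hderiv : deriv (fun t => c * gaussianKernel S (update x i t))
      = fun t => -(S *ᵥ update x i t) i * (c * gaussianKernel S (update x i t)) :=
    funext fun t => (hasDerivAt_gaussianKernel_update hS c x i t).deriv
  rw [hderiv, (((hasDerivAt_mulVec_update_apply S x i i (x i)).fun_neg).fun_mul
    (hasDerivAt_gaussianKernel_update hS c x i (x i))).deriv, update_eq_self]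
  ring

theorem deriv_mulVec_update_mul_gaussianKernel (hS : S.IsSymm) (A : Matrix n n ℝ) (c : ℝ)
    (x : n → ℝ) (i : n) :
    deriv (fun t => (A *ᵥ update x i t) i * (c * gaussianKernel S (update x i t))) (x i)
      = (A i i - (A *ᵥ x) i * (S *ᵥ x) i) * (c * gaussianKernel S x) := by
  rw [((hasDerivAt_mulVec_update_apply A x i i (x i)).fun_mul
    (hasDerivAt_gaussianKernel_update hS c x i (x i))).deriv, update_eq_self]
  ring

end Gaussian

section Lyapunov

variable {n : Type*} [Fintype n] {A S : Matrix n n ℝ} {Dc : ℝ}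

theorem dotProduct_mulVec_mulVec_of_lyapunov (hS : S.IsSymm)
    (h : S * A + Aᵀ * S = (2 * Dc) • (S * S)) (x : n → ℝ) :
    (A *ᵥ x) ⬝ᵥ (S *ᵥ x) = Dc * ((S *ᵥ x) ⬝ᵥ (S *ᵥ x)) := by
  have hx := congrArg (fun M => x ⬝ᵥ M *ᵥ x) h
  simp only [add_mulVec, smul_mulVec, ← mulVec_mulVec, dotProduct_add, dotProduct_smul,
    dotProduct_mulVec x, hS.vecMul_eq_mulVec, vecMul_transpose, smul_eq_mul] at hx
  rw [dotProduct_comm (S *ᵥ x)] at hx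
  linarith

theorem stationary_coeff_eq_zero_of_lyapunov (hS : S.IsSymm)
    (h : S * A + Aᵀ * S = (2 * Dc) • (S * S)) (htr : A.trace = Dc * S.trace) (x : n → ℝ) :
    Dc * ∑ i, ((S *ᵥ x) i ^ 2 - S i i) + ∑ i, (A i i - (A *ᵥ x) i * (S *ᵥ x) i) = 0 := by
  have hq := dotProduct_mulVec_mulVec_of_lyapunov hS h x
  simp only [Finset.sum_sub_distrib, dotProduct, trace, Matrix.diag_apply, sq] at hq htr ⊢
  rw [htr, hq]
  ring

variable [DecidableEq n] {W : Matrix n n ℝ}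

theorem inv_mul_add_transpose_mul_inv_of_lyapunov (hW : IsUnit W.det)
    (h : A * W + W * Aᵀ = (2 * Dc) • 1) : W⁻¹ * A + Aᵀ * W⁻¹ = (2 * Dc) • (W⁻¹ * W⁻¹) :=
  calc W⁻¹ * A + Aᵀ * W⁻¹ = W⁻¹ * (A * W + W * Aᵀ) * W⁻¹ := by
        rw [Matrix.mul_add, Matrix.add_mul, ← Matrix.mul_assoc, Matrix.mul_assoc _ W,
          mul_nonsing_inv _ hW, Matrix.mul_one, ← Matrix.mul_assoc, nonsing_inv_mul _ hW,
          Matrix.one_mul]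
    _ = (2 * Dc) • (W⁻¹ * W⁻¹) := by
        rw [h, Matrix.mul_smul, Matrix.smul_mul, Matrix.mul_one]

theorem trace_eq_of_lyapunov (hW : IsUnit W.det) (h : A * W + W * Aᵀ = (2 * Dc) • 1) :
    A.trace = Dc * W⁻¹.trace := by
  have htr := congrArg (fun M => (M * W⁻¹).trace) h
  simp only [Matrix.add_mul, trace_add, Matrix.mul_assoc, mul_nonsing_inv _ hW, Matrix.mul_one,
    Matrix.smul_mul, Matrix.one_mul, trace_smul, smul_eq_mul] at htr
  rw [trace_mul_comm W, Matrix.mul_assoc, nonsing_inv_mul _ hW, Matrix.mul_one,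
    trace_transpose] at htr
  linarith

end Lyapunov

theorem gaussianKernel_ou_stationary {n : Type*} [Fintype n] [DecidableEq n]
    {A S : Matrix n n ℝ} {Dc : ℝ} (hS : S.IsSymm) (h : S * A + Aᵀ * S = (2 * Dc) • (S * S))
    (htr : A.trace = Dc * S.trace) (c : ℝ) (x : n → ℝ) :
    Dc * ∑ i, deriv (deriv fun t => c * gaussianKernel S (update x i t)) (x i)
      + ∑ i, deriv (fun t => (A *ᵥ update x i t) i * (c * gaussianKernel S (update x i t)))
        (x i) = 0 := by
  simp only [deriv_deriv_gaussianKernel_update hS, deriv_mulVec_update_mul_gaussianKernel hS,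
    ← Finset.sum_mul]
  rw [← mul_assoc, ← add_mul, stationary_coeff_eq_zero_of_lyapunov hS h htr, zero_mul]

theorem ou_stationary_solution_multidim_general
    (d : ℕ)
    (A W : Matrix (Fin d) (Fin d) ℝ) (Dc : ℝ)
    (hWsymm : W.IsSymm) (hWpos : W.PosDef)
    (hLyap : A * W + W * Aᵀ = (2 * Dc) • (1 : Matrix (Fin d) (Fin d) ℝ))
    (ρ : (Fin d → ℝ) → ℝ)
    (hρ : ∀ x : Fin d → ℝ,
      ρ x = (Real.sqrt ((2 * π) ^ d * W.det))⁻¹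
        * Real.exp (-(1 / 2) * (x ⬝ᵥ W⁻¹.mulVec x))) :
    ∀ x : Fin d → ℝ,
      Dc * ∑ i, deriv (deriv (fun y => ρ (Function.update x i y))) (x i)
        + ∑ i, deriv (fun y =>
            A.mulVec (Function.update x i y) i * ρ (Function.update x i y)) (x i) = 0 := by
  have hW : IsUnit W.det := hWpos.det_pos.ne'.isUnit
  obtain rfl : ρ = fun x => (√((2 * π) ^ d * W.det))⁻¹ * gaussianKernel W⁻¹ x := funext hρ
  exact gaussianKernel_ou_stationary hWsymm.inv
    (inv_mul_add_transpose_mul_inv_of_lyapunov hW hLyap) (trace_eq_of_lyapunov hW hLyap) _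

/-- if the symmetric positive-definite matrix `W` solves the
Lyapunov equation `A W + W Aᵀ = 2 D_c I`, then the Gaussian density
`ρ_st(x) = ((2π)^d det W)^{-1/2} exp(-½ xᵀ W⁻¹ x)` is a stationary solution of
the Ornstein–Uhlenbeck Fokker–Planck equation
`D_c Σᵢ ∂²ρ/∂xᵢ² + Σᵢ ∂/∂xᵢ ((Ax)ᵢ ρ) = 0`. -/
theorem ou_stationary_solution_multidim
    (d : ℕ) (hd : 1 ≤ d)
    (A W : Matrix (Fin d) (Fin d) ℝ) (Dc : ℝ) (hDc : 0 < Dc)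
    (hWsymm : W.IsSymm) (hWpos : W.PosDef)
    (hLyap : A * W + W * Aᵀ = (2 * Dc) • (1 : Matrix (Fin d) (Fin d) ℝ))
    (ρ : (Fin d → ℝ) → ℝ)
    (hρ : ∀ x : Fin d → ℝ,
      ρ x = (Real.sqrt ((2 * π) ^ d * W.det))⁻¹
        * Real.exp (-(1 / 2) * (x ⬝ᵥ W⁻¹.mulVec x))) :
    ∀ x : Fin d → ℝ,
      Dc * ∑ i, deriv (deriv (fun y => ρ (Function.update x i y))) (x i)
        + ∑ i, deriv (fun y =>
            A.mulVec (Function.update x i y) i * ρ (Function.update x i y)) (x i) = 0 :=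
  ou_stationary_solution_multidim_general d A W Dc hWsymm hWpos hLyap ρ hρ
end

section
/- Let N ≥ 2, set M = N − 1 and let x_j = cos(πj/M), j = 0, …, M, be the Chebyshev nodes. Define constants c_j = 2 for j ∈ {0, M} and c_j = 1 otherwise, and define the N×N Chebyshev differentiation matrix D̃ by: D̃[0,0] = (2M² + 1)/6, D̃[M,M] = −(2M² + 1)/6, D̃[j,j] = −x_j/(2(1 − x_j²)) for 0 < j < M, and D̃[i,j] = (c_i/c_j)·(−1)^{i+j}/(x_i − x_j) for i ≠ j. Then D̃ differentiates polynomials exactly on the grid: for every real polynomial p of degree at most N − 1 and every i, ∑_{j=0}^{M} D̃[i,j] · p(x_j) = p'(x_i). -/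
open Real Finset Polynomial

/-!
Differentiating the Lagrange interpolant at distinct nodes `x_j` shows that the exact
differentiation matrix has entries `ℓ_j'(x_i)`. For any nonzero multiple `q` of the nodal
polynomial these are `q'(x_i) / (q'(x_j) (x_i - x_j))` off the diagonal and
`q''(x_i) / (2 q'(x_i))` on it. For the Chebyshev–Lobatto nodes `cos (kπ/M)` one may take
`q = (X² - 1) T_M'`, since the interior nodes are the critical points of `T_M`. Chebyshev's equation
`(1 - x²) T_M'' = x T_M' - M² T_M` gives `q' = x T_M' + M² T_M`; as `T_M(x_k) = (-1)^k`, with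
`x T_M' = M² T_M` at `±1` and `T_M' = 0` inside, `q'(x_k) = c_k (-1)^k M²`. The same equation and
its derivative at `±1` give `q''` at the nodes, and the entries of `D̃` follow.
-/

namespace Lagrange

variable {F ι : Type*} [Field F] {s : Finset ι} {v : ι → F}

theorem eq_C_coeff_mul_nodal {q : F[X]} (hvs : Set.InjOn v s) (hdeg : q.natDegree ≤ #s)
    (hroot : ∀ i ∈ s, q.eval (v i) = 0) : q = C (q.coeff #s) * nodal s v := by
  refine eq_of_degree_sub_lt_of_eval_index_eq s hvs ?_ fun i hi => by
    rw [hroot i hi, eval_mul, eval_nodal_at_node hi, mul_zero]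
  refine degree_lt_iff_coeff_zero _ _ |>.mpr fun m hm => ?_
  rw [coeff_sub, coeff_C_mul]
  rcases (show #s ≤ m by exact_mod_cast hm).eq_or_lt with rfl | hlt
  · have hmonic : (nodal s v).coeff #s = 1 := natDegree_nodal (v := v) ▸ nodal_monic.coeff_natDegree
    rw [hmonic, mul_one, sub_self]
  · rw [coeff_eq_zero_of_natDegree_lt (hdeg.trans_lt hlt),
      coeff_eq_zero_of_natDegree_lt (natDegree_nodal.trans_lt hlt), mul_zero, sub_zero]

variable [DecidableEq ι] {i j : ι}

theorem eval_derivative_eq_sum_basis {f : F[X]} (hvs : Set.InjOn v s) (hf : f.degree < #s)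
    (x : F) :
    (derivative f).eval x = ∑ j ∈ s, f.eval (v j) * (derivative (Lagrange.basis s v j)).eval x := by
  conv_lhs => rw [eq_interpolate hvs hf, interpolate_apply]
  simp only [derivative_sum, derivative_C_mul, eval_finsetSum, eval_mul, eval_C]

theorem basis_eq_C_mul_nodal_erase (hi : i ∈ s) :
    Lagrange.basis s v i = C ((derivative (nodal s v)).eval (v i))⁻¹ * nodal (s.erase i) v := by
  rw [basis_eq_prod_sub_inv_mul_nodal_div hi, nodalWeight_eq_eval_derivative_nodal hi,
    nodal_erase_eq_nodal_div hi]

theorem eval_derivative_basis_of_ne {a : F} (ha : a ≠ 0) (hvs : Set.InjOn v s) (hi : i ∈ s)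
    (hj : j ∈ s) (hij : i ≠ j) :
    (derivative (Lagrange.basis s v j)).eval (v i) =
      (derivative (C a * nodal s v)).eval (v i) /
        ((derivative (C a * nodal s v)).eval (v j) * (v i - v j)) := by
  have hvij : v i - v j ≠ 0 := sub_ne_zero.mpr fun h => hij (hvs hi hj h)
  have hω : (derivative (nodal s v)).eval (v i) =
      (v i - v j) * (derivative (nodal (s.erase j) v)).eval (v i) := by
    rw [nodal_eq_mul_nodal_erase hj, derivative_mul]
    simp [eval_nodal_at_node (mem_erase.mpr ⟨hij, hi⟩)]
  simp only [basis_eq_C_mul_nodal_erase hj, derivative_C_mul, eval_mul, eval_C, hω]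
  field_simp

theorem eval_derivative_basis_self [NeZero (2 : F)] {a : F} (ha : a ≠ 0) (hi : i ∈ s) :
    (derivative (Lagrange.basis s v i)).eval (v i) =
      (derivative^[2] (C a * nodal s v)).eval (v i) /
        (2 * (derivative (C a * nodal s v)).eval (v i)) := by
  have hω : (derivative^[2] (nodal s v)).eval (v i) =
      2 * (derivative (nodal (s.erase i) v)).eval (v i) := by
    rw [nodal_eq_mul_nodal_erase hi, Function.iterate_succ_apply, Function.iterate_one]
    simp only [derivative_mul, derivative_add, derivative_sub, derivative_X, derivative_C,
      sub_zero, zero_mul, one_mul, add_zero, eval_add, eval_mul, eval_sub, eval_X, eval_C,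
      sub_self]
    ring
  simp only [basis_eq_C_mul_nodal_erase hi, derivative_C_mul, iterate_derivative_C_mul, eval_mul,
    eval_C, hω]
  field_simp

end Lagrange

namespace Polynomial.Chebyshev

variable (R : Type*) [CommRing R]

/-- Up to a nonzero constant, the nodal polynomial of the Chebyshev–Lobatto nodes `cos (kπ/n)`,
`0 ≤ k ≤ n`: these are `±1` and the interior critical points of `T n`. -/
noncomputable def lobatto (n : ℤ) : R[X] := (X ^ 2 - 1) * derivative (T R n)

variable {R} {n : ℤ} {t : R}

theorem derivative_lobatto (n : ℤ) :
    derivative (lobatto R n) = X * derivative (T R n) + (n ^ 2 : R[X]) * T R n := by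
  have hode := one_sub_X_sq_mul_derivative_derivative_T_eq_poly_in_T (R := R) n
  rw [lobatto, derivative_mul]
  simp only [Function.iterate_succ_apply, Function.iterate_zero_apply] at hode
  simp only [derivative_sub, derivative_X_sq, derivative_one, C_ofNat]
  linear_combination (norm := (push_cast; ring_nf)) -hode

theorem iterate_derivative_lobatto_two (n : ℤ) :
    derivative^[2] (lobatto R n) =
      (n ^ 2 + 1 : R[X]) * derivative (T R n) + X * derivative^[2] (T R n) := by
  rw [Function.iterate_succ_apply, Function.iterate_one, derivative_lobatto]
  simp only [Function.iterate_succ_apply, Function.iterate_zero_apply, derivative_add,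
    derivative_mul, derivative_X, derivative_pow, derivative_intCast]
  ring

theorem eval_derivative_T_of_sq_eq_one (ht : t ^ 2 = 1) :
    t * (derivative (T R n)).eval t = n ^ 2 * (T R n).eval t ∧
      3 * t * (derivative^[2] (T R n)).eval t = (n ^ 2 - 1) * (derivative (T R n)).eval t := by
  have h0 := one_sub_X_sq_mul_iterate_derivative_T_eval n 0 t
  have h1 := one_sub_X_sq_mul_iterate_derivative_T_eval n 1 t
  simp only [ht, sub_self, zero_mul, Function.iterate_zero_apply, zero_add,
    Function.iterate_one] at h0 h1
  push_cast at h0 h1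
  exact ⟨by linear_combination -h0, by linear_combination -h1⟩

theorem eval_derivative_lobatto_of_sq_eq_one (ht : t ^ 2 = 1) :
    (derivative (lobatto R n)).eval t = 2 * n ^ 2 * (T R n).eval t := by
  have h := (eval_derivative_T_of_sq_eq_one (n := n) ht).1
  simp only [derivative_lobatto, eval_add, eval_mul, eval_X, eval_pow, eval_intCast]
  linear_combination h

theorem eval_iterate_derivative_lobatto_of_sq_eq_one (ht : t ^ 2 = 1) :
    3 * (derivative^[2] (lobatto R n)).eval t =
      t * (2 * n ^ 2 + 1) * (derivative (lobatto R n)).eval t := by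
  obtain ⟨h1, h2⟩ := eval_derivative_T_of_sq_eq_one (n := n) ht
  rw [eval_derivative_lobatto_of_sq_eq_one ht]
  simp only [iterate_derivative_lobatto_two, eval_add, eval_mul, eval_X, eval_pow, eval_intCast,
    eval_one]
  linear_combination h2 + (4 * (n : R) ^ 2 + 2) * (t * h1 - (derivative (T R n)).eval t * ht)

theorem eval_derivative_lobatto_of_eval_derivative_T_eq_zero
    (hT : (derivative (T R n)).eval t = 0) :
    (derivative (lobatto R n)).eval t = n ^ 2 * (T R n).eval t := by
  simp [derivative_lobatto, hT]

theorem eval_iterate_derivative_lobatto_of_eval_derivative_T_eq_zero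
    (hT : (derivative (T R n)).eval t = 0) :
    (1 - t ^ 2) * (derivative^[2] (lobatto R n)).eval t =
      -t * (derivative (lobatto R n)).eval t := by
  have h := one_sub_X_sq_mul_iterate_derivative_T_eval n 0 t
  simp only [Function.iterate_zero_apply, zero_add, Function.iterate_one, hT] at h
  rw [eval_derivative_lobatto_of_eval_derivative_T_eq_zero hT]
  simp only [iterate_derivative_lobatto_two, eval_add, eval_mul, eval_X, eval_pow, eval_intCast,
    eval_one, hT]
  linear_combination t * h

theorem natDegree_lobatto_le [IsDomain R] [NeZero (2 : R)] (hn : n ≠ 0) :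
    (lobatto R n).natDegree ≤ n.natAbs + 1 := by
  refine natDegree_mul_le.trans ?_
  have hT := natDegree_derivative_le (T R n)
  rw [natDegree_T] at hT
  have hX : (X ^ 2 - 1 : R[X]).natDegree = 2 := by rw [← C_1, natDegree_X_pow_sub_C]
  have := Int.natAbs_pos.mpr hn
  omega

variable {M k : ℕ}

theorem sq_cos_nat_mul_pi_div_eq_one (hM : M ≠ 0) (hk : k = 0 ∨ k = M) :
    cos (k * π / M) ^ 2 = 1 := by
  rcases hk with rfl | rfl
  · simp
  · simp [mul_div_cancel_left₀ π (Nat.cast_ne_zero.mpr hM)]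

theorem eval_T_real_cos_nat_mul_pi_div (hM : M ≠ 0) :
    (T ℝ M).eval (cos (k * π / M)) = (-1) ^ k := by
  rw [eval_T_real_cos_int_mul_pi_div hM, Int.cast_negOnePow_natCast]

theorem eval_derivative_T_real_cos_nat_mul_pi_div (hk₀ : k ≠ 0) (hkM : k < M) :
    (derivative (T ℝ M)).eval (cos (k * π / M)) = 0 := by
  rw [← Polynomial.deriv]
  exact (isLocalExtr_T_real (by omega) (Nat.pos_of_ne_zero hk₀) hkM).deriv_eq_zero

theorem eval_lobatto_cos_nat_mul_pi_div (hM : M ≠ 0) (hk : k ≤ M) :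
    (lobatto ℝ M).eval (cos (k * π / M)) = 0 := by
  simp only [lobatto, eval_mul, eval_sub, eval_pow, eval_X, eval_one]
  by_cases hend : k = 0 ∨ k = M
  · rw [sq_cos_nat_mul_pi_div_eq_one hM hend, sub_self, zero_mul]
  · rw [eval_derivative_T_real_cos_nat_mul_pi_div (by omega) (by omega), mul_zero]

theorem eval_derivative_lobatto_cos_nat_mul_pi_div (hM : M ≠ 0) (hk : k ≤ M) :
    (derivative (lobatto ℝ M)).eval (cos (k * π / M)) =
      (if k = 0 ∨ k = M then 2 else 1) * (-1) ^ k * M ^ 2 := by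
  split_ifs with hend
  · rw [eval_derivative_lobatto_of_sq_eq_one (sq_cos_nat_mul_pi_div_eq_one hM hend),
      Int.cast_natCast, eval_T_real_cos_nat_mul_pi_div hM]
    ring
  · rw [eval_derivative_lobatto_of_eval_derivative_T_eq_zero
      (eval_derivative_T_real_cos_nat_mul_pi_div (by omega) (by omega)),
      Int.cast_natCast, eval_T_real_cos_nat_mul_pi_div hM]
    ring

theorem eval_iterate_derivative_lobatto_cos_div (hM : M ≠ 0) (hk : k ≤ M) :
    (derivative^[2] (lobatto ℝ M)).eval (cos (k * π / M)) /
        (2 * (derivative (lobatto ℝ M)).eval (cos (k * π / M))) =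
      if k = 0 then (2 * (M : ℝ) ^ 2 + 1) / 6
      else if k = M then -((2 * (M : ℝ) ^ 2 + 1) / 6)
      else -cos (k * π / M) / (2 * (1 - cos (k * π / M) ^ 2)) := by
  have hq' : (derivative (lobatto ℝ M)).eval (cos (k * π / M)) ≠ 0 := by
    rw [eval_derivative_lobatto_cos_nat_mul_pi_div hM hk]
    have : (M : ℝ) ≠ 0 := Nat.cast_ne_zero.mpr hM
    split_ifs <;> simp [this]
  rw [div_eq_iff (mul_ne_zero two_ne_zero hq')]
  split_ifs with h0 hMk
  · have h := eval_iterate_derivative_lobatto_of_sq_eq_one (n := M)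
      (sq_cos_nat_mul_pi_div_eq_one hM (.inl h0))
    have ht : cos (k * π / M) = 1 := by simp [h0]
    rw [ht, Int.cast_natCast] at h
    rw [ht]
    linear_combination h / 3
  · have h := eval_iterate_derivative_lobatto_of_sq_eq_one (n := M)
      (sq_cos_nat_mul_pi_div_eq_one hM (.inr hMk))
    have ht : cos (k * π / M) = -1 := by
      simp [hMk, mul_div_cancel_left₀ π (Nat.cast_ne_zero.mpr hM)]
    rw [ht, Int.cast_natCast] at h
    rw [ht]
    linear_combination h / 3
  · have h := eval_iterate_derivative_lobatto_of_eval_derivative_T_eq_zero (n := M)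
      (eval_derivative_T_real_cos_nat_mul_pi_div h0 (lt_of_le_of_ne hk hMk))
    have ht : 1 - cos (k * π / M) ^ 2 ≠ 0 := by
      intro h1
      rw [h1, zero_mul, neg_mul, zero_eq_neg, mul_eq_zero] at h
      rcases h with h | h
      · simp [h] at h1
      · exact hq' h
    field_simp
    linear_combination h

theorem injective_cos_fin_mul_pi_div (hM : M ≠ 0) :
    Function.Injective fun j : Fin (M + 1) => cos ((j : ℕ) * π / M) := by
  have hmem (j : Fin (M + 1)) : (j : ℕ) * π / M ∈ Set.Icc 0 π := by
    refine ⟨by positivity, (div_le_iff₀ (by positivity)).mpr ?_⟩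
    have : ((j : ℕ) : ℝ) ≤ M := by exact_mod_cast Nat.lt_succ_iff.mp j.isLt
    nlinarith [pi_pos]
  intro a b hab
  have h := injOn_cos (hmem a) (hmem b) hab
  field_simp at h
  exact Fin.ext (by exact_mod_cast h)

theorem lobatto_eq_C_mul_nodal (hM : M ≠ 0) :
    ∃ a ≠ 0, lobatto ℝ M =
      Polynomial.C a * Lagrange.nodal univ (fun j : Fin (M + 1) => cos ((j : ℕ) * π / M)) := by
  have hq := Lagrange.eq_C_coeff_mul_nodal (s := univ) (injective_cos_fin_mul_pi_div hM).injOn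
    (by simpa using natDegree_lobatto_le (R := ℝ) (n := M) (by omega))
    fun j _ => eval_lobatto_cos_nat_mul_pi_div hM (Nat.lt_succ_iff.mp j.isLt)
  refine ⟨_, fun h0 => ?_, hq⟩
  have h := eval_derivative_lobatto_cos_nat_mul_pi_div hM (Nat.zero_le M)
  rw [hq, h0, map_zero, zero_mul, derivative_zero, eval_zero] at h
  simp [hM] at h

end Polynomial.Chebyshev

open Polynomial.Chebyshev in
/-- the Chebyshev spectral differentiation matrix `D̃` on the
Chebyshev–Gauss–Lobatto nodes `x_j = cos(πj/M)`, `M = N-1`, differentiates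
polynomials of degree at most `N-1` exactly on the grid:
`∑_j D̃[i,j] p(x_j) = p'(x_i)`. -/
theorem chebyshev_differentiation_matrix_exact
    (N : ℕ) (hN : 2 ≤ N) (M : ℕ) (hM : M = N - 1)
    (x : Fin N → ℝ) (hx : ∀ j : Fin N, x j = Real.cos (π * j / M))
    (c : Fin N → ℝ)
    (hc : ∀ j : Fin N, c j = if (j : ℕ) = 0 ∨ (j : ℕ) = M then 2 else 1)
    (D : Matrix (Fin N) (Fin N) ℝ)
    (hD : ∀ i j : Fin N,
      D i j =
        if i = j then
          (if (i : ℕ) = 0 then (2 * (M : ℝ) ^ 2 + 1) / 6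
           else if (i : ℕ) = M then -((2 * (M : ℝ) ^ 2 + 1) / 6)
           else -(x j) / (2 * (1 - x j ^ 2)))
        else (c i / c j) * (-1 : ℝ) ^ ((i : ℕ) + (j : ℕ)) / (x i - x j)) :
    ∀ p : Polynomial ℝ, p.natDegree ≤ N - 1 →
      ∀ i : Fin N, ∑ j, D i j * p.eval (x j) = (Polynomial.derivative p).eval (x i) := by
  intro p hp i
  obtain rfl : N = M + 1 := by omega
  have hM0 : M ≠ 0 := by omega
  have hx' : x = fun j : Fin (M + 1) => cos ((j : ℕ) * π / M) := funext fun j => by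
    rw [hx, mul_comm π]
  have hinj : Function.Injective x := hx' ▸ injective_cos_fin_mul_pi_div hM0
  obtain ⟨a, ha, hqa⟩ := lobatto_eq_C_mul_nodal hM0
  rw [← hx'] at hqa
  have hdeg : p.degree < #(univ : Finset (Fin (M + 1))) := by
    rw [card_univ, Fintype.card_fin]
    exact (degree_le_of_natDegree_le hp).trans_lt (by exact_mod_cast Nat.sub_lt M.succ_pos one_pos)
  rw [Lagrange.eval_derivative_eq_sum_basis hinj.injOn hdeg]
  refine sum_congr rfl fun j _ => ?_
  rw [mul_comm, hD]
  congr 1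
  have hk (j : Fin (M + 1)) : (j : ℕ) ≤ M := Nat.lt_succ_iff.mp j.isLt
  rcases eq_or_ne i j with rfl | hij
  · rw [if_pos rfl, Lagrange.eval_derivative_basis_self ha (mem_univ _), ← hqa, hx',
      eval_iterate_derivative_lobatto_cos_div hM0 (hk i)]
  · rw [if_neg hij, Lagrange.eval_derivative_basis_of_ne ha hinj.injOn (mem_univ _) (mem_univ _)
      hij, ← hqa, hx', eval_derivative_lobatto_cos_nat_mul_pi_div hM0 (hk i),
      eval_derivative_lobatto_cos_nat_mul_pi_div hM0 (hk j), ← hc, ← hc, pow_add]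
    have hcj : c j ≠ 0 := by rw [hc]; split_ifs <;> norm_num
    have hsq : ((-1 : ℝ) ^ (j : ℕ)) ^ 2 = 1 := by
      rw [← pow_mul, mul_comm, pow_mul, neg_one_sq, one_pow]
    field_simp
    rw [hsq, mul_one]
end
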